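/- In a completely randomized experiment with 2 ≤ N₁ ≤ N−2, Neyman's variance estimator V̂ = s₁²/N₁ + s₀²/N₀ satisfies E[V̂] − Var(τ̂) = S_τ²/N ≥ 0; in particular E[V̂] ≥ Var(τ̂), with equality if and only if the individual causal effects are constant, i.e., Y_i(1) − Y_i(0) = τ for all i (equivalently S_τ² = 0). -/

import Mathlib

open Finset

noncomputable section

/-- Completely randomized assignments: vectors in `{0,1}^N` with exactly `N₁` ones. -/
def CRD (N N₁ : ℕ) : Finset (Fin N → Bool) :=
  Finset.univ.filter fun T => (Finset.univ.filter fun i => T i = true).card = N₁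

noncomputable def crdExp (N N₁ : ℕ) (f : (Fin N → Bool) → ℝ) : ℝ :=
  (∑ T ∈ CRD N N₁, f T) / ((CRD N N₁).card : ℝ)

noncomputable def crdVar (N N₁ : ℕ) (f : (Fin N → Bool) → ℝ) : ℝ :=
  crdExp N N₁ fun T => (f T - crdExp N N₁ f) ^ 2

/-- The difference-in-means estimator based on observed outcomes
`Yᵢobs = Tᵢ Yᵢ(1) + (1−Tᵢ) Yᵢ(0)`. -/
noncomputable def tauhat (N N₁ : ℕ) (Y1 Y0 : Fin N → ℝ) (T : Fin N → Bool) : ℝ :=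
  (∑ i, if T i then Y1 i else 0) / (N₁ : ℝ)
    - (∑ i, if T i then 0 else Y0 i) / ((N - N₁ : ℕ) : ℝ)

noncomputable def ybar1obs (N N₁ : ℕ) (Y1 : Fin N → ℝ) (T : Fin N → Bool) : ℝ :=
  (∑ i, if T i then Y1 i else 0) / (N₁ : ℝ)

noncomputable def ybar0obs (N N₁ : ℕ) (Y0 : Fin N → ℝ) (T : Fin N → Bool) : ℝ :=
  (∑ i, if T i then 0 else Y0 i) / ((N - N₁ : ℕ) : ℝ)

/-- Sample variance of the observed outcomes in the treated group. -/
noncomputable def s1sq (N N₁ : ℕ) (Y1 : Fin N → ℝ) (T : Fin N → Bool) : ℝ :=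
  (∑ i, if T i then (Y1 i - ybar1obs N N₁ Y1 T) ^ 2 else 0) / ((N₁ : ℝ) - 1)

/-- Sample variance of the observed outcomes in the control group. -/
noncomputable def s0sq (N N₁ : ℕ) (Y0 : Fin N → ℝ) (T : Fin N → Bool) : ℝ :=
  (∑ i, if T i then 0 else (Y0 i - ybar0obs N N₁ Y0 T) ^ 2)
    / (((N - N₁ : ℕ) : ℝ) - 1)

/-- Neyman's variance estimator `V̂ = s₁²/N₁ + s₀²/N₀`. -/
noncomputable def neymanVhat (N N₁ : ℕ) (Y1 Y0 : Fin N → ℝ) (T : Fin N → Bool) : ℝ :=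
  s1sq N N₁ Y1 T / (N₁ : ℝ) + s0sq N N₁ Y0 T / ((N - N₁ : ℕ) : ℝ)

/-!
Write `a = Y(1) - Ȳ(1)` and `b = Y(0) - Ȳ(0)`. Everything reduces to the first two moments of
`∑_{i ∈ A} w i` over a uniformly random `n`-subset `A` of the `N` units. Invariance of the design
under permutations of the units gives the inclusion probabilities `n / N` and
`n (n - 1) / (N (N - 1))`, hence `E[∑_A w] = (n / N) ∑ w` and, for centred `w`,
`E[(∑_A w)²] = n (N - n) / (N (N - 1)) ∑ w²`.

Consequently the within-group sample variance is unbiased for the population variance: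
`E[s₁²] = S₁²`, and `E[s₀²] = S₀²` because the control group is the treated group of the complementary design.
On the other hand `τ̂ - τ = ∑_A (a / N₁ + b / N₀)`, so
`Var τ̂ = N₁ N₀ / (N (N - 1)) ∑ (a / N₁ + b / N₀)²`, and with `N = N₁ + N₀` the pointwise identity
`a² / N₁ + b² / N₀ - N₁ N₀ / N (a / N₁ + b / N₀)² = (a - b)² / N` gives `E[V̂] - Var τ̂ = S_τ² / N`.
-/

section Expectation

variable {N n : ℕ}

theorem mem_CRD {T : Fin N → Bool} : T ∈ CRD N n ↔ #{i | T i = true} = n := by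
  simp [CRD]

theorem CRD_nonempty (h : n ≤ N) : (CRD N n).Nonempty :=
  ⟨fun i => decide (i.val < n), by
    rw [mem_CRD]
    simpa using Fin.card_filter_val_lt.trans (min_eq_right h)⟩

theorem crdExp_congr {f g : (Fin N → Bool) → ℝ} (hfg : ∀ T ∈ CRD N n, f T = g T) :
    crdExp N n f = crdExp N n g := by
  rw [crdExp, crdExp, sum_congr rfl hfg]

theorem crdExp_add (f g : (Fin N → Bool) → ℝ) :
    crdExp N n (fun T => f T + g T) = crdExp N n f + crdExp N n g := by
  simp only [crdExp, sum_add_distrib, add_div]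

theorem crdExp_sub (f g : (Fin N → Bool) → ℝ) :
    crdExp N n (fun T => f T - g T) = crdExp N n f - crdExp N n g := by
  simp only [crdExp, sum_sub_distrib, sub_div]

theorem crdExp_const_mul (c : ℝ) (f : (Fin N → Bool) → ℝ) :
    crdExp N n (fun T => c * f T) = c * crdExp N n f := by
  simp only [crdExp, ← mul_sum, mul_div_assoc]

theorem crdExp_div_const (f : (Fin N → Bool) → ℝ) (c : ℝ) :
    crdExp N n (fun T => f T / c) = crdExp N n f / c := by
  simp only [crdExp, ← sum_div, div_right_comm]

theorem crdExp_sum {ι : Type*} (s : Finset ι) (f : ι → (Fin N → Bool) → ℝ) :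
    crdExp N n (fun T => ∑ i ∈ s, f i T) = ∑ i ∈ s, crdExp N n (f i) := by
  simp only [crdExp, sum_div]
  exact sum_comm

theorem crdExp_const (h : n ≤ N) (c : ℝ) : crdExp N n (fun _ => c) = c := by
  have : ((CRD N n).card : ℝ) ≠ 0 := by exact_mod_cast (CRD_nonempty h).card_ne_zero
  simp [crdExp, this]

theorem crdExp_comp_perm (σ : Equiv.Perm (Fin N)) (f : (Fin N → Bool) → ℝ) :
    crdExp N n (fun T => f (T ∘ σ)) = crdExp N n f := by
  have hmem : ∀ (τ : Equiv.Perm (Fin N)) T, T ∈ CRD N n → T ∘ τ ∈ CRD N n := by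
    intro τ T hT
    rw [mem_CRD, card_filter] at hT ⊢
    exact (Equiv.sum_comp τ fun i => if T i = true then 1 else 0).trans hT
  rw [crdExp, crdExp, sum_nbij' (· ∘ σ) (· ∘ σ.symm) (hmem σ) (hmem σ.symm)]
  · intro T _; ext i; simp
  · intro T _; ext i; simp
  · intro T _; rfl

theorem sum_CRD_comp_not (h : n ≤ N) (f : (Fin N → Bool) → ℝ) :
    ∑ T ∈ CRD N n, f (fun i => !T i) = ∑ T ∈ CRD N (N - n), f T := by
  have hmem : ∀ {m} T, T ∈ CRD N m → (fun i => !T i) ∈ CRD N (N - m) := by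
    intro m T hT
    rw [mem_CRD] at hT ⊢
    have hsplit := card_filter_add_card_filter_not (s := univ) (fun i => T i = true)
    simp only [Bool.not_eq_true', Bool.not_eq_true, card_univ, Fintype.card_fin] at hsplit ⊢
    omega
  refine sum_nbij' (fun T i => !T i) (fun T i => !T i) hmem ?_ ?_ ?_ ?_
  · intro T hT
    simpa [Nat.sub_sub_self h] using hmem T hT
  · intro T _; ext i; simp
  · intro T _; ext i; simp
  · intro T _; rfl

theorem crdExp_comp_not (h : n ≤ N) (f : (Fin N → Bool) → ℝ) :
    crdExp N n (fun T => f (fun i => !T i)) = crdExp N (N - n) f := by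
  have hcard : ((CRD N n).card : ℝ) = (CRD N (N - n)).card := by
    simpa using sum_CRD_comp_not h fun _ => (1 : ℝ)
  rw [crdExp, crdExp, sum_CRD_comp_not h, hcard]

end Expectation

section SampleSums

variable {N n : ℕ}

theorem sum_ite_one_of_mem_CRD {T : Fin N → Bool} (hT : T ∈ CRD N n) :
    ∑ i, (if T i then (1 : ℝ) else 0) = n := by
  rw [mem_CRD] at hT
  rw [sum_boole, hT]

theorem crdExp_ite_one (h : n ≤ N) (i : Fin N) :
    crdExp N n (fun T => if T i then 1 else 0) = n / N := by
  have hsymm : ∀ j, crdExp N n (fun T => if T j then (1 : ℝ) else 0)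
      = crdExp N n (fun T => if T i then 1 else 0) := fun j => by
    simpa using crdExp_comp_perm (Equiv.swap i j) (fun T => if T i then (1 : ℝ) else 0)
  have htotal : ∑ j, crdExp N n (fun T => if T j then (1 : ℝ) else 0) = n := by
    rw [← crdExp_sum, crdExp_congr fun T hT => sum_ite_one_of_mem_CRD hT, crdExp_const h]
  simp only [hsymm, sum_const, card_univ, Fintype.card_fin, nsmul_eq_mul] at htotal
  have hN : (N : ℝ) ≠ 0 := by exact_mod_cast i.pos.ne'
  rw [← htotal, mul_div_cancel_left₀ _ hN]

theorem crdExp_ite_and_one (h : n ≤ N) {i j : Fin N} (hij : i ≠ j) :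
    crdExp N n (fun T => if T i ∧ T j then 1 else 0) = n * (n - 1) / (N * (N - 1)) := by
  have hsymm : ∀ k ∈ univ.erase i, crdExp N n (fun T => if T i ∧ T k then (1 : ℝ) else 0)
      = crdExp N n (fun T => if T i ∧ T j then 1 else 0) := fun k hk => by
    have hki : k ≠ i := (mem_erase.mp hk).1
    by_cases hkj : k = j
    · rw [hkj]
    simpa [Equiv.swap_apply_of_ne_of_ne hij hki.symm] using
      crdExp_comp_perm (Equiv.swap j k) (fun T => if T i ∧ T j then (1 : ℝ) else 0)
  have hrow : ∀ T ∈ CRD N n, ∑ k ∈ univ.erase i, (if T i ∧ T k then (1 : ℝ) else 0)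
      = (n - 1) * if T i then 1 else 0 := fun T hT => by
    by_cases hTi : T i
    · simp only [hTi, true_and, if_true, mul_one]
      rw [sum_erase_eq_sub (mem_univ i), sum_ite_one_of_mem_CRD hT, if_pos hTi]
    · simp [hTi]
  have htotal := calc
    ∑ k ∈ univ.erase i, crdExp N n (fun T => if T i ∧ T k then (1 : ℝ) else 0)
      = crdExp N n (fun T => (n - 1) * if T i then 1 else 0) := by
        rw [← crdExp_sum, crdExp_congr hrow]
    _ = (n - 1) * (n / N) := by rw [crdExp_const_mul, crdExp_ite_one h]
  rw [sum_congr rfl hsymm, sum_const, card_erase_of_mem (mem_univ i), card_univ,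
    Fintype.card_fin, nsmul_eq_mul] at htotal
  have hN : 1 < N := by simpa using Fintype.one_lt_card_iff.mpr ⟨i, j, hij⟩
  have hN0 : (N : ℝ) ≠ 0 := by positivity
  have hN1 : (N : ℝ) - 1 ≠ 0 := sub_ne_zero.mpr (by exact_mod_cast hN.ne')
  rw [Nat.cast_sub hN.le, Nat.cast_one] at htotal
  field_simp at htotal ⊢
  linear_combination htotal

theorem crdExp_sum_ite (h : n ≤ N) (u : Fin N → ℝ) :
    crdExp N n (fun T => ∑ i, if T i then u i else 0) = n / N * ∑ i, u i := by
  have hboole : ∀ T : Fin N → Bool,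
      (∑ i, if T i then u i else 0) = ∑ i, u i * if T i then 1 else 0 := fun T => by
    simp only [mul_boole]
  simp only [hboole, crdExp_sum, crdExp_const_mul, crdExp_ite_one h, ← sum_mul, mul_comm]

theorem crdExp_sum_ite_sq (h : n ≤ N) (hN : 1 < N) (w : Fin N → ℝ) (hw : ∑ i, w i = 0) :
    crdExp N n (fun T => (∑ i, if T i then w i else 0) ^ 2)
      = n * (N - n) / (N * (N - 1)) * ∑ i, w i ^ 2 := by
  set p : ℝ := n / N
  set q : ℝ := n * (n - 1) / (N * (N - 1))
  have hexpand : ∀ T : Fin N → Bool, (∑ i, if T i then w i else 0) ^ 2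
      = ∑ i, ∑ j, w i * w j * if T i ∧ T j then 1 else 0 := fun T => by
    rw [sq, sum_mul_sum]
    refine sum_congr rfl fun i _ => sum_congr rfl fun j _ => ?_
    by_cases hi : T i <;> by_cases hj : T j <;> simp [hi, hj]
  have hrow : ∀ i, ∑ j, w i * w j * crdExp N n (fun T => if T i ∧ T j then 1 else 0)
      = (p - q) * w i ^ 2 := fun i => by
    rw [← add_sum_erase _ _ (mem_univ i),
      sum_congr rfl fun j hj => by rw [crdExp_ite_and_one h (mem_erase.mp hj).1.symm]]
    simp only [and_self, crdExp_ite_one h]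
    rw [← sum_mul, ← mul_sum, sum_erase_eq_sub (mem_univ i), hw]
    ring
  have hN0 : (N : ℝ) ≠ 0 := by positivity
  have hN1 : (N : ℝ) - 1 ≠ 0 := sub_ne_zero.mpr (by exact_mod_cast hN.ne')
  calc crdExp N n (fun T => (∑ i, if T i then w i else 0) ^ 2)
      = ∑ i, ∑ j, w i * w j * crdExp N n (fun T => if T i ∧ T j then 1 else 0) := by
        simp only [hexpand, crdExp_sum, crdExp_const_mul]
    _ = (p - q) * ∑ i, w i ^ 2 := by rw [sum_congr rfl fun i _ => hrow i, mul_sum]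
    _ = n * (N - n) / (N * (N - 1)) * ∑ i, w i ^ 2 := by
        congr 1
        simp only [p, q]
        field_simp
        ring

end SampleSums

section PopulationMoments

variable {N : ℕ}

def popMean (y : Fin N → ℝ) : ℝ := (∑ i, y i) / N

def popVar (y : Fin N → ℝ) : ℝ := (∑ i, (y i - popMean y) ^ 2) / (N - 1)

theorem sum_sub_popMean (y : Fin N → ℝ) : ∑ i, (y i - popMean y) = 0 := by
  rcases Nat.eq_zero_or_pos N with rfl | hN
  · simp
  rw [sum_sub_distrib, sum_const, card_univ, Fintype.card_fin, nsmul_eq_mul, popMean,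
    mul_div_cancel₀ _ (by positivity), sub_self]

theorem popMean_sub (y z : Fin N → ℝ) :
    popMean (fun i => y i - z i) = popMean y - popMean z := by
  simp only [popMean, sum_sub_distrib, sub_div]

theorem popVar_nonneg (y : Fin N → ℝ) : 0 ≤ popVar y := by
  rcases Nat.eq_zero_or_pos N with rfl | hN
  · simp [popVar]
  exact div_nonneg (sum_nonneg fun i _ => sq_nonneg _) (sub_nonneg.mpr (Nat.one_le_cast.mpr hN))

theorem popVar_eq_zero_iff (hN : 1 < N) (y : Fin N → ℝ) :
    popVar y = 0 ↔ ∀ i, y i = popMean y := by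
  have hN1 : (N : ℝ) - 1 ≠ 0 := sub_ne_zero.mpr (by exact_mod_cast hN.ne')
  rw [popVar, div_eq_zero_iff, or_iff_left hN1,
    sum_eq_zero_iff_of_nonneg fun i _ => sq_nonneg _]
  simp [sub_eq_zero]

end PopulationMoments

section Neyman

variable {N n : ℕ}

theorem sum_ite_sub_of_mem_CRD {T : Fin N → Bool} (hT : T ∈ CRD N n) (y : Fin N → ℝ) (c : ℝ) :
    ∑ i, (if T i then y i - c else 0) = (∑ i, if T i then y i else 0) - n * c := by
  rw [← sum_ite_one_of_mem_CRD hT, sum_mul, ← sum_sub_distrib]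
  refine sum_congr rfl fun i _ => ?_
  split_ifs <;> ring

theorem sum_ite_sq_sub_ybar1obs {T : Fin N → Bool} (hT : T ∈ CRD N n) (hn : n ≠ 0)
    (y : Fin N → ℝ) (c : ℝ) :
    ∑ i, (if T i then (y i - ybar1obs N n y T) ^ 2 else 0)
      = ∑ i, (if T i then (y i - c) ^ 2 else 0)
        - (∑ i, if T i then y i - c else 0) ^ 2 / n := by
  set S := ∑ i, if T i then y i - c else 0
  have hn' : (n : ℝ) ≠ 0 := by exact_mod_cast hn
  have hybar : ybar1obs N n y T = c + S / n := by
    simp only [ybar1obs, S, sum_ite_sub_of_mem_CRD hT]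
    field_simp
    ring
  have hpt : ∀ i, (if T i then (y i - ybar1obs N n y T) ^ 2 else 0)
      = (if T i then (y i - c) ^ 2 else 0) - 2 * (S / n) * (if T i then y i - c else 0)
        + (S / n) ^ 2 * (if T i then 1 else 0) := fun i => by
    rw [hybar]
    split_ifs <;> ring
  rw [sum_congr rfl fun i _ => hpt i, sum_add_distrib, sum_sub_distrib, ← mul_sum, ← mul_sum,
    sum_ite_one_of_mem_CRD hT]
  field_simp
  ring

theorem crdExp_s1sq (h2 : 2 ≤ n) (h : n ≤ N) (y : Fin N → ℝ) :
    crdExp N n (s1sq N n y) = popVar y := by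
  have hs : ∀ T ∈ CRD N n, s1sq N n y T
      = 1 / (n - 1) * ((∑ i, if T i then (y i - popMean y) ^ 2 else 0)
        - 1 / n * (∑ i, if T i then y i - popMean y else 0) ^ 2) := fun T hT => by
    rw [s1sq, sum_ite_sq_sub_ybar1obs hT (by omega) y (popMean y)]
    ring
  rw [crdExp_congr hs, crdExp_const_mul, crdExp_sub, crdExp_const_mul, crdExp_sum_ite h,
    crdExp_sum_ite_sq h (by omega) _ (sum_sub_popMean y), popVar]
  have hn1 : (n : ℝ) - 1 ≠ 0 := sub_ne_zero.mpr (by exact_mod_cast (by omega : n ≠ 1))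
  have hN1 : (N : ℝ) - 1 ≠ 0 := sub_ne_zero.mpr (by exact_mod_cast (by omega : N ≠ 1))
  have hn : (n : ℝ) ≠ 0 := by exact_mod_cast (by omega : n ≠ 0)
  have hN : (N : ℝ) ≠ 0 := by exact_mod_cast (by omega : N ≠ 0)
  field_simp
  ring

theorem s0sq_eq_s1sq_not (y : Fin N → ℝ) (T : Fin N → Bool) :
    s0sq N n y T = s1sq N (N - n) y (fun i => !T i) := by
  have hnot : ∀ (b : Bool) (u v : ℝ), (if (!b) = true then u else v) = if b then v else u := by
    intro b u v
    cases b <;> rfl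
  simp only [s0sq, s1sq, ybar0obs, ybar1obs, hnot]

theorem crdExp_s0sq (h2 : 2 ≤ N - n) (h : n ≤ N) (y : Fin N → ℝ) :
    crdExp N n (s0sq N n y) = popVar y := by
  rw [show s0sq N n y = fun T => s1sq N (N - n) y (fun i => !T i) from
    funext (s0sq_eq_s1sq_not y), crdExp_comp_not h, crdExp_s1sq h2 (Nat.sub_le N n)]

theorem crdExp_neymanVhat (h1 : 2 ≤ n) (h0 : 2 ≤ N - n) (Y1 Y0 : Fin N → ℝ) :
    crdExp N n (neymanVhat N n Y1 Y0) = popVar Y1 / n + popVar Y0 / (N - n : ℕ) := by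
  unfold neymanVhat
  rw [crdExp_add, crdExp_div_const, crdExp_div_const, crdExp_s1sq h1 (by omega),
    crdExp_s0sq h0 (by omega)]

theorem sum_ite_zero_left_eq_sub (T : Fin N → Bool) (y : Fin N → ℝ) :
    ∑ i, (if T i then 0 else y i) = ∑ i, y i - ∑ i, if T i then y i else 0 := by
  rw [eq_sub_iff_add_eq, ← sum_add_distrib]
  exact sum_congr rfl fun i _ => by split_ifs <;> simp

theorem sum_div_add_div_sub_popMean (Y1 Y0 : Fin N → ℝ) (a b : ℝ) :
    ∑ i, ((Y1 i - popMean Y1) / a + (Y0 i - popMean Y0) / b) = 0 := by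
  rw [sum_add_distrib, ← sum_div, ← sum_div, sum_sub_popMean, sum_sub_popMean, zero_div,
    zero_div, add_zero]

theorem tauhat_sub_eq_sum_ite {T : Fin N → Bool} (hT : T ∈ CRD N n) (hn : 0 < n) (hnN : n < N)
    (Y1 Y0 : Fin N → ℝ) :
    tauhat N n Y1 Y0 T - (popMean Y1 - popMean Y0)
      = ∑ i, if T i then (Y1 i - popMean Y1) / n + (Y0 i - popMean Y0) / (N - n : ℕ) else 0 := by
  have hsplit : ∀ i, (if T i then (Y1 i - popMean Y1) / n + (Y0 i - popMean Y0) / (N - n : ℕ)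
      else 0) = (if T i then Y1 i - popMean Y1 else 0) / n
        + (if T i then Y0 i - popMean Y0 else 0) / (N - n : ℕ) := fun i => by
    split_ifs <;> simp
  have hN : (N : ℝ) ≠ 0 := by exact_mod_cast (by omega : N ≠ 0)
  have hn' : (n : ℝ) ≠ 0 := by exact_mod_cast hn.ne'
  have hm : (N : ℝ) - n ≠ 0 := sub_ne_zero.mpr (by exact_mod_cast hnN.ne')
  have hY0 : ∑ i, Y0 i = N * popMean Y0 := by rw [popMean, mul_div_cancel₀ _ hN]
  rw [sum_congr rfl fun i _ => hsplit i, sum_add_distrib, ← sum_div, ← sum_div,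
    sum_ite_sub_of_mem_CRD hT, sum_ite_sub_of_mem_CRD hT, tauhat, sum_ite_zero_left_eq_sub, hY0,
    Nat.cast_sub hnN.le]
  field_simp
  ring

theorem crdExp_tauhat (hn : 0 < n) (hnN : n < N) (Y1 Y0 : Fin N → ℝ) :
    crdExp N n (tauhat N n Y1 Y0) = popMean Y1 - popMean Y0 := by
  have hcenter := crdExp_congr fun T (hT : T ∈ CRD N n) => tauhat_sub_eq_sum_ite hT hn hnN Y1 Y0
  rw [crdExp_sub, crdExp_const hnN.le, crdExp_sum_ite hnN.le, sum_div_add_div_sub_popMean,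
    mul_zero, sub_eq_zero] at hcenter
  exact hcenter

theorem crdVar_tauhat (hn : 0 < n) (hnN : n < N) (Y1 Y0 : Fin N → ℝ) :
    crdVar N n (tauhat N n Y1 Y0) = n * (N - n) / (N * (N - 1))
      * ∑ i, ((Y1 i - popMean Y1) / n + (Y0 i - popMean Y0) / (N - n : ℕ)) ^ 2 := by
  rw [crdVar, crdExp_tauhat hn hnN,
    crdExp_congr fun T hT => by rw [tauhat_sub_eq_sum_ite hT hn hnN Y1 Y0],
    crdExp_sum_ite_sq hnN.le (by omega) _ (sum_div_add_div_sub_popMean Y1 Y0 _ _)]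

theorem crdExp_neymanVhat_sub_crdVar_tauhat (h1 : 2 ≤ n) (h0 : 2 ≤ N - n) (Y1 Y0 : Fin N → ℝ) :
    crdExp N n (neymanVhat N n Y1 Y0) - crdVar N n (tauhat N n Y1 Y0)
      = popVar (fun i => Y1 i - Y0 i) / N := by
  rw [crdExp_neymanVhat h1 h0, crdVar_tauhat (by omega) (by omega),
    Nat.cast_sub (by omega : n ≤ N)]
  simp only [popVar, popMean_sub]
  have hN : (N : ℝ) ≠ 0 := by exact_mod_cast (by omega : N ≠ 0)
  have hN1 : (N : ℝ) - 1 ≠ 0 := sub_ne_zero.mpr (by exact_mod_cast (by omega : N ≠ 1))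
  have hn : (n : ℝ) ≠ 0 := by exact_mod_cast (by omega : n ≠ 0)
  have hm : (N : ℝ) - n ≠ 0 := sub_ne_zero.mpr (by exact_mod_cast (by omega : N ≠ n))
  simp only [sum_div, mul_sum, ← sum_add_distrib, ← sum_sub_distrib]
  refine sum_congr rfl fun i _ => ?_
  field_simp
  ring

end Neyman

/-- Neyman's variance estimator satisfies
`E[V̂] − Var(τ̂) = S_τ²/N ≥ 0`; in particular `E[V̂] ≥ Var(τ̂)`, with equality if
and only if the individual causal effects are constant, `Yᵢ(1) − Yᵢ(0) = τ` for
all `i` (equivalently `S_τ² = 0`). -/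
theorem stmt6 (N N₁ : ℕ) (h1 : 2 ≤ N₁) (h2 : N₁ ≤ N - 2) (Y1 Y0 : Fin N → ℝ) :
    crdExp N N₁ (neymanVhat N N₁ Y1 Y0) - crdVar N N₁ (tauhat N N₁ Y1 Y0)
      = ((∑ i, ((Y1 i - Y0 i) - (∑ j, (Y1 j - Y0 j)) / (N : ℝ)) ^ 2)
          / ((N : ℝ) - 1)) / (N : ℝ) ∧
    (0 : ℝ) ≤ ((∑ i, ((Y1 i - Y0 i) - (∑ j, (Y1 j - Y0 j)) / (N : ℝ)) ^ 2)
          / ((N : ℝ) - 1)) / (N : ℝ) ∧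
    crdVar N N₁ (tauhat N N₁ Y1 Y0) ≤ crdExp N N₁ (neymanVhat N N₁ Y1 Y0) ∧
    (crdExp N N₁ (neymanVhat N N₁ Y1 Y0) = crdVar N N₁ (tauhat N N₁ Y1 Y0)
      ↔ ∀ i, Y1 i - Y0 i = (∑ j, (Y1 j - Y0 j)) / (N : ℝ)) ∧
    ((∀ i, Y1 i - Y0 i = (∑ j, (Y1 j - Y0 j)) / (N : ℝ))
      ↔ (∑ i, ((Y1 i - Y0 i) - (∑ j, (Y1 j - Y0 j)) / (N : ℝ)) ^ 2)
          / ((N : ℝ) - 1) = 0) := by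
  have hgap := crdExp_neymanVhat_sub_crdVar_tauhat h1 (by omega) Y1 Y0
  have hN : (0 : ℝ) < N := by exact_mod_cast (by omega : 0 < N)
  have hgap_nonneg := div_nonneg (popVar_nonneg fun i => Y1 i - Y0 i) hN.le
  have hconst := popVar_eq_zero_iff (by omega : 1 < N) fun i => Y1 i - Y0 i
  refine ⟨hgap, hgap_nonneg, by linarith, ?_, hconst.symm⟩
  rw [← sub_eq_zero, hgap, div_eq_zero_iff, or_iff_left hN.ne']
  exact hconst
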